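/- Let G be a strongly connected digraph with α ∈ [0,1), let X be the positive Perron eigenvector of A_α(G) with λ_α(G) its spectral radius, and let v_p, v_q be distinct vertices. Suppose v_1,...,v_t are in-neighbors of v_p that are neither in-neighbors of v_q nor equal to v_q. Let H be obtained from G by replacing each arc (v_i, v_p) by (v_i, v_q) for i = 1,...,t. If x_{v_q} ≥ x_{v_p}, then λ_α(H) ≥ λ_α(G). Furthermore, if H is strongly connected and x_{v_q} > x_{v_p}, then λ_α(H) > λ_α(G). -/

import Mathlib

open scoped Classical
open Matrix

/-- Spectral radius: largest modulus of (complex) eigenvalues, i.e. roots of the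
characteristic polynomial of the complexified matrix. -/
noncomputable def specRad {m : Type*} [Fintype m] [DecidableEq m] (M : Matrix m m ℝ) : ℝ :=
  sSup {r : ℝ | ∃ μ : ℂ, (M.map Complex.ofReal).charpoly.IsRoot μ ∧ r = ‖μ‖}

/-- Irreducibility of a matrix: the associated digraph is strongly connected. -/
def Irred {n : ℕ} (M : Matrix (Fin n) (Fin n) ℝ) : Prop :=
  ∀ i j : Fin n, Relation.ReflTransGen (fun a b => M a b ≠ 0) i j

/-- Outdegree of a vertex in a digraph on `Fin n`. -/
noncomputable def outdeg {n : ℕ} (G : Fin n → Fin n → Prop) (i : Fin n) : ℕ :=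
  (Finset.univ.filter (fun j => G i j)).card

/-- Indegree of a vertex. -/
noncomputable def indeg {n : ℕ} (G : Fin n → Fin n → Prop) (i : Fin n) : ℕ :=
  (Finset.univ.filter (fun j => G j i)).card

/-- The matrix `A_α(G) = α D(G) + (1-α) A(G)`. -/
noncomputable def Aalpha {n : ℕ} (α : ℝ) (G : Fin n → Fin n → Prop) :
    Matrix (Fin n) (Fin n) ℝ :=
  α • Matrix.diagonal (fun i => (outdeg G i : ℝ)) +
    (1 - α) • (Matrix.of fun i j => if G i j then (1 : ℝ) else 0)

/-- The `A_α` spectral radius of a digraph. -/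
noncomputable def lamAlpha {n : ℕ} (α : ℝ) (G : Fin n → Fin n → Prop) : ℝ :=
  specRad (Aalpha α G)

/-- Strong connectivity of a digraph. -/
def SConn {n : ℕ} (G : Fin n → Fin n → Prop) : Prop :=
  ∀ u v : Fin n, Relation.ReflTransGen G u v

/-- Isomorphism of digraphs on `Fin n`. -/
def DIso {n : ℕ} (G H : Fin n → Fin n → Prop) : Prop :=
  ∃ e : Equiv.Perm (Fin n), ∀ u v, G u v ↔ H (e u) (e v)

/-- The directed cycle on `Fin n`. -/
def dirCycle (n : ℕ) : Fin n → Fin n → Prop :=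
  fun i j => j.val = (i.val + 1) % n


/-- Deleting a set of vertices from a digraph. -/
def delVerts {n : ℕ} (G : Fin n → Fin n → Prop) (S : Finset (Fin n)) :
    Fin n → Fin n → Prop :=
  fun a b => G a b ∧ a ∉ S ∧ b ∉ S

/-- The digraph obtained by deleting the vertices of `S` is strongly connected. -/
def SConnAvoid {n : ℕ} (G : Fin n → Fin n → Prop) (S : Finset (Fin n)) : Prop :=
  ∀ u v : Fin n, u ∉ S → v ∉ S → Relation.ReflTransGen (delVerts G S) u v

/-- The vertex connectivity of `G` equals `k`. -/
def vertexConnIs {n : ℕ} (G : Fin n → Fin n → Prop) (k : ℕ) : Prop :=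
  (∃ S : Finset (Fin n), S.card = k ∧ ¬ SConnAvoid G S) ∧
    ∀ S : Finset (Fin n), ¬ SConnAvoid G S → k ≤ S.card

/-- Deleting a set of arcs from a digraph. -/
def delArcs {n : ℕ} (G : Fin n → Fin n → Prop) (S : Finset (Fin n × Fin n)) :
    Fin n → Fin n → Prop :=
  fun a b => G a b ∧ (a, b) ∉ S

/-- The arc connectivity of `G` equals `k`. -/
def arcConnIs {n : ℕ} (G : Fin n → Fin n → Prop) (k : ℕ) : Prop :=
  (∃ S : Finset (Fin n × Fin n), S.card = k ∧ ¬ SConn (delArcs G S)) ∧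
    ∀ S : Finset (Fin n × Fin n), ¬ SConn (delArcs G S) → k ≤ S.card

/-- `G` contains a directed cycle of length `g`. -/
def hasCycleLen {n : ℕ} (G : Fin n → Fin n → Prop) (g : ℕ) : Prop :=
  ∃ c : Fin g → Fin n, Function.Injective c ∧
    ∀ i : Fin g, G (c i) (c ⟨(i.val + 1) % g, Nat.mod_lt _ i.pos⟩)

/-- The girth of `G` equals `g`. -/
def girthIs {n : ℕ} (G : Fin n → Fin n → Prop) (g : ℕ) : Prop :=
  hasCycleLen G g ∧ ∀ m, 0 < m → m < g → ¬ hasCycleLen G m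

/-- The clique number of `G` equals `d`. -/
def cliqueNumIs {n : ℕ} (G : Fin n → Fin n → Prop) (d : ℕ) : Prop :=
  (∃ S : Finset (Fin n), S.card = d ∧ ∀ u ∈ S, ∀ v ∈ S, u ≠ v → G u v ∧ G v u) ∧
    ∀ S : Finset (Fin n), (∀ u ∈ S, ∀ v ∈ S, u ≠ v → G u v ∧ G v u) → S.card ≤ d

/-- The digraph `C_{n,g}`: the directed cycle `v_1 … v_g v_1` (indices `0,…,g-1`)
together with the directed path `v_g v_{g+1} … v_n v_1`. -/
def Cng (n g : ℕ) : Fin n → Fin n → Prop := fun i j =>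
  j.val = i.val + 1 ∨ (i.val = g - 1 ∧ j.val = 0) ∨ (i.val = n - 1 ∧ j.val = 0)

/-- `C'_{n,g} = C_{n,g} - {(v_n, v_1)} + {(v_n, v_g)}`. -/
def Cng' (n g : ℕ) : Fin n → Fin n → Prop := fun i j =>
  j.val = i.val + 1 ∨ (i.val = g - 1 ∧ j.val = 0) ∨ (i.val = n - 1 ∧ j.val = g - 1)

/-- The digraph `B_{n,d}`: a complete digraph on the `d` vertices
`{0} ∪ {n-d+1, …, n-1}` together with the directed path `v_1 v_2 … v_{n-d+2}`
(indices `0, 1, …, n-d+1`). -/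
def Bnd (n d : ℕ) : Fin n → Fin n → Prop := fun i j =>
  (j.val = i.val + 1 ∧ j.val ≤ n - d + 1) ∨
    (i ≠ j ∧ (i.val = 0 ∨ n - d + 1 ≤ i.val) ∧ (j.val = 0 ∨ n - d + 1 ≤ j.val))

/-- `B'_{n,d} = B_{n,d} - {(v_{n-d+1}, v_{n-d+2})} + {(v_{n-d+1}, v_1)}`. -/
def Bnd' (n d : ℕ) : Fin n → Fin n → Prop := fun i j =>
  (j.val = i.val + 1 ∧ j.val ≤ n - d) ∨ (i.val = n - d ∧ j.val = 0) ∨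
    (i ≠ j ∧ (i.val = 0 ∨ n - d + 1 ≤ i.val) ∧ (j.val = 0 ∨ n - d + 1 ≤ j.val))

/-- The digraph `K(n,k,m)`: parts `K_m` (indices `< m`), `K_k` (indices in `[m, m+k)`),
`K_{n-k-m}` (indices `≥ m+k`); all parts complete, `K_k` joined both ways to the others,
and all one-way arcs from `K_m` to `K_{n-k-m}`. -/
def Knkm (n k m : ℕ) : Fin n → Fin n → Prop := fun i j =>
  i ≠ j ∧ ¬(m + k ≤ i.val ∧ j.val < m)

/-!
Let `A = A_α(H)` and `λ = λ_α(G)`. Rerouting the arcs keeps every out-degree, so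
`A X = λ X + (1 - α)(x_q - x_p) 𝟙_T`. When `x_q ≥ x_p` this says `λ X ≤ A X` for the positive
vector `X`, and the Collatz–Wielandt bound gives `λ ≤ λ_α(H)`: iterating, `λ^k X ≤ A^k X` forces
`‖A^k‖ ≥ λ^k`, and Gelfand's formula turns this into a lower bound on the spectral radius.
When moreover `x_q > x_p` and `H` is strongly connected, the defect `(1 - α)(x_q - x_p) 𝟙_T` is
nonzero, so some power `P = (1 + A)^K` makes it entrywise positive; as `P` commutes with `A`, the
positive vector `Z = P X` satisfies `A Z ≥ λ Z + P(defect) ≥ (λ + ε) Z` for some `ε > 0`.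
-/

open Finset
open scoped ENNReal NNReal

section NonnegMatrix

variable {ι : Type*} [Fintype ι]

lemma mulVec_mono_of_nonneg {M : Matrix ι ι ℝ} (hM : ∀ i j, 0 ≤ M i j) {u v : ι → ℝ}
    (huv : u ≤ v) : M *ᵥ u ≤ M *ᵥ v :=
  fun i => dotProduct_le_dotProduct_of_nonneg_left huv (hM i)

lemma mulVec_nonneg_of_nonneg {M : Matrix ι ι ℝ} (hM : ∀ i j, 0 ≤ M i j) {v : ι → ℝ}
    (hv : 0 ≤ v) : 0 ≤ M *ᵥ v := by
  simpa using mulVec_mono_of_nonneg hM hv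

lemma nonneg_of_mulVec_eq_smul [Nonempty ι] {M : Matrix ι ι ℝ} (hM : ∀ i j, 0 ≤ M i j)
    {X : ι → ℝ} (hX : ∀ i, 0 < X i) {μ : ℝ} (h : M *ᵥ X = μ • X) : 0 ≤ μ := by
  obtain ⟨i⟩ := ‹Nonempty ι›
  have := mulVec_nonneg_of_nonneg hM (fun j => (hX j).le) i
  rw [h, Pi.smul_apply, smul_eq_mul] at this
  exact nonneg_of_mul_nonneg_left this (hX i)

lemma pow_smul_le_pow_mulVec [DecidableEq ι] {M : Matrix ι ι ℝ} (hM : ∀ i j, 0 ≤ M i j)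
    {Z : ι → ℝ} {μ : ℝ} (hμ : 0 ≤ μ) (h : μ • Z ≤ M *ᵥ Z) (k : ℕ) :
    μ ^ k • Z ≤ M ^ k *ᵥ Z := by
  induction k with
  | zero => simp
  | succ k ih =>
    calc μ ^ (k + 1) • Z = μ ^ k • (μ • Z) := by rw [pow_succ, mul_smul]
      _ ≤ μ ^ k • (M *ᵥ Z) := smul_le_smul_of_nonneg_left h (pow_nonneg hμ k)
      _ = M *ᵥ (μ ^ k • Z) := (mulVec_smul M _ Z).symm
      _ ≤ M *ᵥ (M ^ k *ᵥ Z) := mulVec_mono_of_nonneg hM ih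
      _ = M ^ (k + 1) *ᵥ Z := by rw [mulVec_mulVec, pow_succ']

lemma exists_pos_smul_le [Nonempty ι] {Z U : ι → ℝ} (hZ : ∀ i, 0 < Z i) (hU : ∀ i, 0 < U i) :
    ∃ ε : ℝ, 0 < ε ∧ ε • Z ≤ U := by
  obtain ⟨i₀, -, hi₀⟩ := exists_min_image univ (fun i => U i / Z i) univ_nonempty
  refine ⟨U i₀ / Z i₀, div_pos (hU i₀) (hZ i₀), fun i => ?_⟩
  have := hi₀ i (mem_univ i)
  rw [Pi.smul_apply, smul_eq_mul, ← le_div_iff₀ (hZ i)]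
  exact this

end NonnegMatrix

lemma le_spectralRadius_of_pow_le_nnnorm_pow {A : Type*} [NormedRing A] [NormedAlgebra ℂ A]
    [CompleteSpace A] (a : A) {c : ℝ≥0} (h : ∀ k : ℕ, c ^ k ≤ ‖a ^ k‖₊) :
    (c : ℝ≥0∞) ≤ spectralRadius ℂ a := by
  refine ge_of_tendsto (spectrum.pow_nnnorm_pow_one_div_tendsto_nhds_spectralRadius a) ?_
  filter_upwards [Filter.eventually_ne_atTop 0] with k hk
  calc (c : ℝ≥0∞) = ((c : ℝ≥0∞) ^ k) ^ (1 / (k : ℝ)) := by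
        rw [← ENNReal.rpow_natCast, ← ENNReal.rpow_mul, mul_one_div_cancel (by exact_mod_cast hk),
          ENNReal.rpow_one]
    _ ≤ (‖a ^ k‖₊ : ℝ≥0∞) ^ (1 / (k : ℝ)) := by
        gcongr
        exact_mod_cast h k

lemma norm_le_specRad_of_mem_spectrum {ι : Type*} [Fintype ι] [DecidableEq ι]
    (M : Matrix ι ι ℝ) {z : ℂ} (hz : z ∈ spectrum ℂ (M.map ((↑) : ℝ → ℂ))) :
    ‖z‖ ≤ specRad M := by
  have hfin := Polynomial.finite_setOfPred_isRoot (M.map ((↑) : ℝ → ℂ)).charpoly_monic.ne_zero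
  refine le_csSup ((hfin.image (‖·‖)).bddAbove.mono ?_)
    ⟨z, Matrix.mem_spectrum_iff_isRoot_charpoly.mp hz, rfl⟩
  rintro r ⟨μ, hμ, rfl⟩
  exact ⟨μ, hμ, rfl⟩

section CollatzWielandt

attribute [local instance] Matrix.linftyOpNormedAddCommGroup Matrix.linftyOpNormedRing
  Matrix.linftyOpNormedAlgebra

variable {ι : Type*} [Fintype ι]

lemma le_linfty_opNorm_of_smul_le_mulVec [Nonempty ι] {M : Matrix ι ι ℝ}
    (hM : ∀ i j, 0 ≤ M i j) {Z : ι → ℝ} (hZ : ∀ i, 0 < Z i) {μ : ℝ} (h : μ • Z ≤ M *ᵥ Z) :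
    μ ≤ ‖M‖ := by
  obtain ⟨i, -, hi⟩ := exists_max_image univ Z univ_nonempty
  have hrow : μ * Z i ≤ (∑ j, M i j) * Z i :=
    calc μ * Z i ≤ ∑ j, M i j * Z j := h i
      _ ≤ ∑ j, M i j * Z i :=
        sum_le_sum fun j _ => mul_le_mul_of_nonneg_left (hi j (mem_univ j)) (hM i j)
      _ = (∑ j, M i j) * Z i := (sum_mul ..).symm
  have hnorm : ∑ j, M i j ≤ ‖M‖ := by
    rw [Matrix.linfty_opNorm_def]
    refine le_trans (le_of_eq ?_)
      (NNReal.coe_le_coe.mpr (le_sup (f := fun i => ∑ j, ‖M i j‖₊) (mem_univ i)))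
    push_cast
    exact sum_congr rfl fun j _ => (Real.norm_of_nonneg (hM i j)).symm
  exact (le_of_mul_le_mul_right hrow (hZ i)).trans hnorm

lemma linfty_opNorm_map_ofReal (M : Matrix ι ι ℝ) : ‖M.map ((↑) : ℝ → ℂ)‖ = ‖M‖ := by
  simp [Matrix.linfty_opNorm_def]

theorem le_specRad_of_smul_le_mulVec [DecidableEq ι] [Nonempty ι] {M : Matrix ι ι ℝ}
    (hM : ∀ i j, 0 ≤ M i j) {Z : ι → ℝ} (hZ : ∀ i, 0 < Z i) {μ : ℝ} (hμ : 0 ≤ μ)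
    (h : μ • Z ≤ M *ᵥ Z) : μ ≤ specRad M := by
  have : CompleteSpace (Matrix ι ι ℂ) := FiniteDimensional.complete ℂ _
  have hpow (k : ℕ) : μ.toNNReal ^ k ≤ ‖M.map ((↑) : ℝ → ℂ) ^ k‖₊ := by
    have hmap : M.map ((↑) : ℝ → ℂ) ^ k = (M ^ k).map (↑) :=
      (map_pow Complex.ofRealHom.mapMatrix M k).symm
    rw [← NNReal.coe_le_coe, NNReal.coe_pow, Real.coe_toNNReal μ hμ, coe_nnnorm, hmap,
      linfty_opNorm_map_ofReal]
    exact le_linfty_opNorm_of_smul_le_mulVec (pow_apply_nonneg hM k) hZ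
      (pow_smul_le_pow_mulVec hM hμ h k)
  obtain ⟨z, hz, hz_norm⟩ := spectrum.exists_nnnorm_eq_spectralRadius (M.map ((↑) : ℝ → ℂ))
  have hμz := le_spectralRadius_of_pow_le_nnnorm_pow _ hpow
  rw [← hz_norm, ENNReal.coe_le_coe, ← NNReal.coe_le_coe, Real.coe_toNNReal μ hμ,
    coe_nnnorm] at hμz
  exact hμz.trans (norm_le_specRad_of_mem_spectrum M hz)

end CollatzWielandt

lemma one_add_apply_nonneg {ι : Type*} [DecidableEq ι] {M : Matrix ι ι ℝ}
    (hM : ∀ i j, 0 ≤ M i j) (i j : ι) : 0 ≤ (1 + M) i j := by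
  rw [Matrix.add_apply, one_apply]
  split_ifs <;> linarith [hM i j]

section Irreducible

variable {ι : Type*} [Fintype ι] [DecidableEq ι] {M : Matrix ι ι ℝ}

lemma le_one_add_mulVec (hM : ∀ i j, 0 ≤ M i j) {v : ι → ℝ} (hv : 0 ≤ v) :
    v ≤ (1 + M) *ᵥ v := by
  rw [add_mulVec, one_mulVec]
  exact le_add_of_nonneg_right (mulVec_nonneg_of_nonneg hM hv)

lemma one_add_pow_mulVec_nonneg (hM : ∀ i j, 0 ≤ M i j) {w : ι → ℝ} (hw : 0 ≤ w) (k : ℕ) :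
    0 ≤ (1 + M) ^ k *ᵥ w :=
  mulVec_nonneg_of_nonneg (pow_apply_nonneg (one_add_apply_nonneg hM) k) hw

lemma monotone_one_add_pow_mulVec (hM : ∀ i j, 0 ≤ M i j) {w : ι → ℝ} (hw : 0 ≤ w) :
    Monotone fun k : ℕ => (1 + M) ^ k *ᵥ w :=
  monotone_nat_of_le_succ fun k => by
    rw [pow_succ', ← mulVec_mulVec]
    exact le_one_add_mulVec hM (one_add_pow_mulVec_nonneg hM hw k)

lemma exists_one_add_pow_mulVec_pos_of_reflTransGen (hM : ∀ i j, 0 ≤ M i j) {w : ι → ℝ}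
    (hw : 0 ≤ w) {i j : ι} (hj : 0 < w j)
    (hij : Relation.ReflTransGen (fun a b => M a b ≠ 0) i j) :
    ∃ k, 0 < ((1 + M) ^ k *ᵥ w) i := by
  induction hij using Relation.ReflTransGen.head_induction_on with
  | refl => exact ⟨0, by simpa using hj⟩
  | @head a b hab _ ih =>
    obtain ⟨k, hk⟩ := ih
    set v := (1 + M) ^ k *ᵥ w
    have hv : 0 ≤ v := one_add_pow_mulVec_nonneg hM hw k
    have hMv : M a b * v b ≤ (M *ᵥ v) a :=
      single_le_sum (f := fun j => M a j * v j) (fun j _ => mul_nonneg (hM a j) (hv j))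
        (mem_univ b)
    refine ⟨k + 1, ?_⟩
    rw [pow_succ', ← mulVec_mulVec, add_mulVec, one_mulVec]
    change 0 < v a + (M *ᵥ v) a
    exact add_pos_of_nonneg_of_pos (hv a) ((mul_pos ((hM a b).lt_of_ne' hab) hk).trans_le hMv)

end Irreducible

lemma exists_one_add_pow_mulVec_pos {n : ℕ} {M : Matrix (Fin n) (Fin n) ℝ}
    (hM : ∀ i j, 0 ≤ M i j) (hirr : Irred M) {w : Fin n → ℝ} (hw : 0 ≤ w) {j : Fin n}
    (hj : 0 < w j) : ∃ K, ∀ i, 0 < ((1 + M) ^ K *ᵥ w) i := by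
  choose k hk using fun i => exists_one_add_pow_mulVec_pos_of_reflTransGen hM hw hj (hirr i j)
  exact ⟨univ.sup k, fun i =>
    (hk i).trans_le (monotone_one_add_pow_mulVec hM hw (le_sup (mem_univ i)) i)⟩

theorem lt_specRad_of_irred {n : ℕ} {M : Matrix (Fin n) (Fin n) ℝ} (hM : ∀ i j, 0 ≤ M i j)
    (hirr : Irred M) {X : Fin n → ℝ} (hX : ∀ i, 0 < X i) {μ : ℝ} (hμ : 0 ≤ μ)
    {w : Fin n → ℝ} (hw : 0 ≤ w) {j : Fin n} (hj : 0 < w j) (h : μ • X + w ≤ M *ᵥ X) :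
    μ < specRad M := by
  have : Nonempty (Fin n) := ⟨j⟩
  obtain ⟨K, hU⟩ := exists_one_add_pow_mulVec_pos hM hirr hw hj
  set P := (1 + M) ^ K
  have hZ : ∀ i, 0 < (P *ᵥ X) i := fun i =>
    (hX i).trans_le <| by
      simpa using monotone_one_add_pow_mulVec hM (fun i => (hX i).le) (Nat.zero_le K) i
  have hPX : μ • (P *ᵥ X) + P *ᵥ w ≤ M *ᵥ (P *ᵥ X) := by
    have hcomm : M * P = P * M := ((Commute.one_right M).add_right (Commute.refl M)).pow_right K
    rw [mulVec_mulVec, hcomm, ← mulVec_mulVec, ← mulVec_smul, ← mulVec_add]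
    exact mulVec_mono_of_nonneg (pow_apply_nonneg (one_add_apply_nonneg hM) K) h
  obtain ⟨ε, hε, hεU⟩ := exists_pos_smul_le hZ hU
  have := le_specRad_of_smul_le_mulVec hM hZ (by positivity : 0 ≤ μ + ε)
    (by rw [add_smul]; exact (add_le_add_right hεU _).trans hPX)
  linarith

section Digraph

variable {n : ℕ}

def rerouteArcs (G : Fin n → Fin n → Prop) (T : Finset (Fin n)) (p q : Fin n) :
    Fin n → Fin n → Prop :=
  fun u v => (G u v ∧ ¬(u ∈ T ∧ v = p)) ∨ (u ∈ T ∧ v = q)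

lemma filter_rerouteArcs_of_mem {G : Fin n → Fin n → Prop} {T : Finset (Fin n)} {p q v : Fin n}
    (hv : v ∈ T) :
    univ.filter (rerouteArcs G T p q v) = insert q ((univ.filter (G v)).erase p) := by
  ext j
  simp only [rerouteArcs, mem_filter, mem_univ, true_and, mem_insert, mem_erase, hv]
  tauto

lemma filter_rerouteArcs_of_notMem {G : Fin n → Fin n → Prop} {T : Finset (Fin n)}
    {p q v : Fin n} (hv : v ∉ T) : univ.filter (rerouteArcs G T p q v) = univ.filter (G v) := by
  ext j
  simp [rerouteArcs, hv]

lemma outdeg_rerouteArcs {G : Fin n → Fin n → Prop} {T : Finset (Fin n)} {p q : Fin n}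
    (hT : ∀ v ∈ T, G v p ∧ ¬ G v q) : outdeg (rerouteArcs G T p q) = outdeg G := by
  funext v
  by_cases hv : v ∈ T
  · have hp : p ∈ univ.filter (G v) := by simp [(hT v hv).1]
    have hq : q ∉ (univ.filter (G v)).erase p := by simp [(hT v hv).2]
    rw [outdeg, filter_rerouteArcs_of_mem hv, card_insert_of_notMem hq, card_erase_add_one hp,
      outdeg]
  · rw [outdeg, filter_rerouteArcs_of_notMem hv, outdeg]

lemma Aalpha_apply (α : ℝ) (G : Fin n → Fin n → Prop) (i j : Fin n) :
    Aalpha α G i j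
      = α * (if i = j then (outdeg G i : ℝ) else 0) + (1 - α) * (if G i j then 1 else 0) := by
  simp [Aalpha, diagonal_apply]

lemma Aalpha_mulVec_apply (α : ℝ) (G : Fin n → Fin n → Prop) (x : Fin n → ℝ) (i : Fin n) :
    (Aalpha α G *ᵥ x) i = α * outdeg G i * x i + (1 - α) * ∑ j ∈ univ.filter (G i), x j := by
  simp only [mulVec, dotProduct, Aalpha_apply, add_mul, sum_add_distrib, sum_filter, mul_sum]
  congr 1
  · simp [mul_assoc]
  · exact sum_congr rfl fun j _ => by split_ifs <;> ring

lemma Aalpha_rerouteArcs_mulVec (α : ℝ) {G : Fin n → Fin n → Prop} {T : Finset (Fin n)}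
    {p q : Fin n} (hT : ∀ v ∈ T, G v p ∧ ¬ G v q) (x : Fin n → ℝ) :
    Aalpha α (rerouteArcs G T p q) *ᵥ x
      = Aalpha α G *ᵥ x + fun i => if i ∈ T then (1 - α) * (x q - x p) else 0 := by
  funext i
  rw [Pi.add_apply, Aalpha_mulVec_apply, Aalpha_mulVec_apply, outdeg_rerouteArcs hT]
  by_cases hi : i ∈ T
  · have hp : p ∈ univ.filter (G i) := by simp [(hT i hi).1]
    have hq : q ∉ (univ.filter (G i)).erase p := by simp [(hT i hi).2]
    rw [filter_rerouteArcs_of_mem hi, sum_insert hq, sum_erase_eq_sub hp, if_pos hi]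
    ring
  · rw [filter_rerouteArcs_of_notMem hi, if_neg hi, add_zero]

lemma Aalpha_nonneg {α : ℝ} (hα0 : 0 ≤ α) (hα1 : α ≤ 1) (G : Fin n → Fin n → Prop)
    (i j : Fin n) : 0 ≤ Aalpha α G i j := by
  have : 0 ≤ 1 - α := by linarith
  rw [Aalpha_apply]
  split_ifs <;> positivity

lemma Aalpha_pos_of_adj {α : ℝ} (hα0 : 0 ≤ α) (hα1 : α < 1) {G : Fin n → Fin n → Prop}
    {i j : Fin n} (h : G i j) : 0 < Aalpha α G i j := by
  have : 0 < 1 - α := by linarith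
  rw [Aalpha_apply, if_pos h]
  split_ifs <;> positivity

lemma irred_Aalpha {α : ℝ} (hα0 : 0 ≤ α) (hα1 : α < 1) {G : Fin n → Fin n → Prop}
    (hG : SConn G) : Irred (Aalpha α G) := fun i j =>
  Relation.ReflTransGen.mono (fun _ _ h => (Aalpha_pos_of_adj hα0 hα1 h).ne') _ _ (hG i j)

end Digraph

theorem stmt6_general {n : ℕ} (α : ℝ) (hα0 : 0 ≤ α) (hα1 : α < 1)
    (G : Fin n → Fin n → Prop)
    (X : Fin n → ℝ) (hXpos : ∀ i, 0 < X i)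
    (hX : (Aalpha α G).mulVec X = lamAlpha α G • X)
    (p q : Fin n)
    (T : Finset (Fin n)) (hTne : T.Nonempty)
    (hTin : ∀ v ∈ T, G v p ∧ ¬ G v q ∧ v ≠ q)
    (H : Fin n → Fin n → Prop)
    (hH : ∀ u v, H u v ↔ ((G u v ∧ ¬(u ∈ T ∧ v = p)) ∨ (u ∈ T ∧ v = q))) :
    (X p ≤ X q → lamAlpha α G ≤ lamAlpha α H) ∧
      (SConn H → X p < X q → lamAlpha α G < lamAlpha α H) := by
  obtain rfl : H = rerouteArcs G T p q := funext₂ fun u v => propext (hH u v)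
  obtain ⟨v₀, hv₀⟩ := hTne
  have : Nonempty (Fin n) := ⟨v₀⟩
  set w : Fin n → ℝ := fun i => if i ∈ T then (1 - α) * (X q - X p) else 0
  have hrow : Aalpha α (rerouteArcs G T p q) *ᵥ X = lamAlpha α G • X + w := by
    rw [Aalpha_rerouteArcs_mulVec α fun v hv => ⟨(hTin v hv).1, (hTin v hv).2.1⟩, hX]
  have hw : X p ≤ X q → 0 ≤ w := fun hpq i => by
    show (0 : ℝ) ≤ if i ∈ T then _ else _
    split_ifs <;> nlinarith
  have hlam : 0 ≤ lamAlpha α G := nonneg_of_mulVec_eq_smul (Aalpha_nonneg hα0 hα1.le G) hXpos hX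
  refine ⟨fun hpq => ?_, fun hconn hpq => ?_⟩
  · exact le_specRad_of_smul_le_mulVec (Aalpha_nonneg hα0 hα1.le _) hXpos hlam
      (hrow ▸ le_add_of_nonneg_right (hw hpq))
  · refine lt_specRad_of_irred (Aalpha_nonneg hα0 hα1.le _) (irred_Aalpha hα0 hα1 hconn) hXpos hlam
      (hw hpq.le) (j := v₀) ?_ hrow.ge
    simp only [w, if_pos hv₀]
    nlinarith

/-- rerouting arcs from in-neighbors of `v_p` towards `v_q` does not
decrease the `A_α` spectral radius when `x_{v_q} ≥ x_{v_p}` (Perron vector entries). -/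
theorem stmt6 {n : ℕ} (α : ℝ) (hα0 : 0 ≤ α) (hα1 : α < 1)
    (G : Fin n → Fin n → Prop) (hGs : ∀ i, ¬ G i i) (hSC : SConn G)
    (X : Fin n → ℝ) (hXpos : ∀ i, 0 < X i)
    (hX : (Aalpha α G).mulVec X = lamAlpha α G • X)
    (p q : Fin n) (hpq : p ≠ q)
    (T : Finset (Fin n)) (hTne : T.Nonempty)
    (hTin : ∀ v ∈ T, G v p ∧ ¬ G v q ∧ v ≠ q)
    (H : Fin n → Fin n → Prop)
    (hH : ∀ u v, H u v ↔ ((G u v ∧ ¬(u ∈ T ∧ v = p)) ∨ (u ∈ T ∧ v = q))) :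
    (X p ≤ X q → lamAlpha α G ≤ lamAlpha α H) ∧
      (SConn H → X p < X q → lamAlpha α G < lamAlpha α H) :=
  stmt6_general α hα0 hα1 G X hXpos hX p q T hTne hTin H hH
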